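/- arXiv:2007.09497 — 4 statements merged into one kernel-verified Lean document; each statement's English description precedes it below -/
import Mathlib

section
/- For every real $\gamma > 0$ there is a constant $C_\gamma$ such that for all $y \ge 4$, $\left| \int_2^{\sqrt{y}} \frac{du}{(u \log u)(\log(y/u))^\gamma} - \frac{\log\log y}{(\log y)^\gamma} \right| \le \frac{C_\gamma}{(\log y)^\gamma}$. -/
/-!
Write `L = log y` and `t = log u ∈ (0, L/2]`, so that `log (y/u) = L - t`. The tangent line of the
convex function `x ↦ x ^ (-γ)` gives `0 ≤ (L - t) ^ (-γ) - L ^ (-γ) ≤ γ t (L/2) ^ (-γ-1)`. Dividing by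
`u t` and integrating, the integral differs from `L ^ (-γ) ∫ du / (u log u)` by at most `γ 2 ^ γ L ^ (-γ)`,
and `∫₂^√y du / (u log u) = log L - log 2 - log log 2`.
-/

open Real MeasureTheory

theorem one_div_rpow_sub_one_div_rpow_le {γ a b : ℝ} (hγ : 0 ≤ γ) (ha : 0 < a) (hab : a ≤ b) :
    1 / a ^ γ - 1 / b ^ γ ≤ γ * (b - a) / (a * a ^ γ) := by
  have hb : 0 < b := ha.trans_le hab
  have hexp : 1 + γ * log (a / b) ≤ (a / b) ^ γ := by
    rw [rpow_def_of_pos (div_pos ha hb)]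
    linarith [add_one_le_exp (log (a / b) * γ)]
  have hlog : -log (a / b) ≤ (b - a) / a := by
    rw [← log_inv, inv_div, sub_div, div_self ha.ne']
    exact log_le_sub_one_of_pos (div_pos hb ha)
  have hdrop : 1 - (a / b) ^ γ ≤ γ * ((b - a) / a) := by nlinarith
  calc 1 / a ^ γ - 1 / b ^ γ = (1 - (a / b) ^ γ) / a ^ γ := by
        rw [div_rpow ha.le hb.le]; field_simp
    _ ≤ γ * ((b - a) / a) / a ^ γ := by gcongr
    _ = γ * (b - a) / (a * a ^ γ) := by field_simp

theorem one_div_rpow_sub_mem_Icc {γ b t : ℝ} (hγ : 0 ≤ γ) (ht : 0 < t) (htb : t ≤ b / 2) :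
    1 / (b - t) ^ γ ∈ Set.Icc (1 / b ^ γ) (1 / b ^ γ + γ * t / (b / 2) ^ (γ + 1)) := by
  have hb2 : 0 < b / 2 := by linarith
  have hbt : 0 < b - t := by linarith
  refine ⟨one_div_le_one_div_of_le (rpow_pos_of_pos hbt γ) (by gcongr; linarith), ?_⟩
  have h := one_div_rpow_sub_one_div_rpow_le hγ hbt (by linarith : b - t ≤ b)
  rw [sub_sub_cancel, ← rpow_one_add' hbt.le (by positivity), add_comm 1 γ] at h
  have : γ * t / (b - t) ^ (γ + 1) ≤ γ * t / (b / 2) ^ (γ + 1) :=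
    div_le_div_of_nonneg_left (by positivity) (rpow_pos_of_pos hb2 _)
      (rpow_le_rpow hb2.le (by linarith) (by linarith))
  linarith

section

variable {γ y u : ℝ}

theorem pos_of_two_le_sqrt (h : 2 ≤ √y) : 0 < y :=
  sqrt_pos.mp (by linarith)

theorem log_mem_Ioc_of_mem_Icc_two_sqrt (hu : u ∈ Set.Icc 2 √y) :
    log u ∈ Set.Ioc 0 (log y / 2) := by
  refine ⟨log_pos (by linarith [hu.1]), ?_⟩
  rw [← log_sqrt (pos_of_two_le_sqrt (hu.1.trans hu.2)).le]
  exact log_le_log (by linarith [hu.1]) hu.2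

theorem integrand_mem_Icc (hγ : 0 ≤ γ) (hu : u ∈ Set.Icc 2 √y) :
    1 / ((u * log u) * log (y / u) ^ γ) ∈
      Set.Icc (u⁻¹ / log u / log y ^ γ)
        (u⁻¹ / log u / log y ^ γ + γ / (log y / 2) ^ (γ + 1) * u⁻¹) := by
  obtain ⟨hlog, hlog_le⟩ := log_mem_Ioc_of_mem_Icc_two_sqrt hu
  have hu0 : 0 < u := by linarith [hu.1]
  have hy : 0 < y := pos_of_two_le_sqrt (hu.1.trans hu.2)
  obtain ⟨hlow, hupp⟩ := one_div_rpow_sub_mem_Icc hγ hlog hlog_le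
  have hsplit : 1 / ((u * log u) * log (y / u) ^ γ) =
      u⁻¹ / log u * (1 / (log y - log u) ^ γ) := by
    rw [log_div hy.ne' hu0.ne']; field_simp
  rw [hsplit]
  constructor
  · calc u⁻¹ / log u / log y ^ γ = u⁻¹ / log u * (1 / log y ^ γ) := by ring
      _ ≤ _ := by gcongr
  · calc u⁻¹ / log u * (1 / (log y - log u) ^ γ)
        ≤ u⁻¹ / log u * (1 / log y ^ γ + γ * log u / (log y / 2) ^ (γ + 1)) := by gcongr
      _ = u⁻¹ / log u / log y ^ γ + γ / (log y / 2) ^ (γ + 1) * u⁻¹ := by field_simp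

theorem continuousOn_integrand :
    ContinuousOn (fun u => 1 / ((u * log u) * log (y / u) ^ γ)) (Set.Icc 2 √y) := by
  intro u hu
  obtain ⟨hlog, hlog_le⟩ := log_mem_Ioc_of_mem_Icc_two_sqrt hu
  have hy : 0 < y := pos_of_two_le_sqrt (hu.1.trans hu.2)
  have hu0 : 0 < u := by linarith [hu.1]
  have hlog_div : 0 < log (y / u) := by
    rw [log_div hy.ne' hu0.ne']; linarith
  exact ContinuousAt.continuousWithinAt
    (by fun_prop (disch := first | positivity | exact Or.inl hlog_div.ne'))

theorem integral_integrand_mem_Icc (hγ : 0 ≤ γ) (hy : 4 ≤ y) :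
    ∫ u in (2 : ℝ)..√y, 1 / ((u * log u) * log (y / u) ^ γ) ∈
      Set.Icc ((∫ u in (2 : ℝ)..√y, u⁻¹ / log u) / log y ^ γ)
        ((∫ u in (2 : ℝ)..√y, u⁻¹ / log u) / log y ^ γ + γ * 2 ^ γ / log y ^ γ) := by
  have h2s : 2 ≤ √y := le_sqrt_of_sq_le (by norm_num [hy])
  have hL : 0 < log y := log_pos (by linarith)
  have hint : IntervalIntegrable (fun u => 1 / ((u * log u) * log (y / u) ^ γ)) volume 2 √y :=
    continuousOn_integrand.intervalIntegrable_of_Icc h2s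
  have hint_main : IntervalIntegrable (fun u => u⁻¹ / log u) volume 2 √y := by
    refine ContinuousOn.intervalIntegrable_of_Icc h2s fun u hu => ?_
    have hu0 : 0 < u := by linarith [hu.1]
    have hlog : 0 < log u := log_pos (by linarith [hu.1])
    exact ContinuousAt.continuousWithinAt
      (by fun_prop (disch := first | positivity | simpa using hlog.ne'))
  have hint_inv : IntervalIntegrable (fun u : ℝ => u⁻¹) volume 2 √y :=
    intervalIntegral.intervalIntegrable_inv (by grind [Set.uIcc]) continuousOn_id
  constructor
  · rw [← intervalIntegral.integral_div]
    exact intervalIntegral.integral_mono_on h2s (hint_main.div_const _) hint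
      fun u hu => (integrand_mem_Icc hγ hu).1
  · refine (intervalIntegral.integral_mono_on h2s hint
      ((hint_main.div_const _).add (hint_inv.const_mul _))
      fun u hu => (integrand_mem_Icc hγ hu).2).trans ?_
    rw [intervalIntegral.integral_add (hint_main.div_const _) (hint_inv.const_mul _),
      intervalIntegral.integral_div, intervalIntegral.integral_const_mul,
      integral_inv_of_pos (by norm_num) (by linarith)]
    have hlog_le : log (√y / 2) ≤ log y / 2 := by
      rw [log_div (by positivity) two_ne_zero, log_sqrt (by linarith)]
      linarith [log_pos one_lt_two]
    have hcoef : γ / (log y / 2) ^ (γ + 1) * (log y / 2) = γ * 2 ^ γ / log y ^ γ := by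
      rw [rpow_add_one (by positivity), div_rpow hL.le two_pos.le]
      field_simp
    rw [← hcoef]
    gcongr

end

/-- for `γ > 0` there is `C_γ` with
`|∫_2^√y du/((u log u)(log(y/u))^γ) - loglog y/(log y)^γ| ≤ C_γ/(log y)^γ` for `y ≥ 4`. -/
theorem stmt_3 (γ : ℝ) (hγ : 0 < γ) :
    ∃ C : ℝ, ∀ y : ℝ, 4 ≤ y →
      |(∫ u in (2 : ℝ)..Real.sqrt y, 1 / ((u * Real.log u) * (Real.log (y / u)) ^ γ)) -
        Real.log (Real.log y) / (Real.log y) ^ γ| ≤ C / (Real.log y) ^ γ := by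
  set e := log 2 + log (log 2)
  refine ⟨γ * 2 ^ γ + |e|, fun y hy => ?_⟩
  have hL : 0 < log y := log_pos (by linarith)
  have hmain : ∫ u in (2 : ℝ)..√y, u⁻¹ / log u = log (log y) - e := by
    rw [integral_inv_div_log one_lt_two
        (one_lt_two.trans_le (le_sqrt_of_sq_le (by norm_num [hy]))),
      log_sqrt (by linarith), log_div hL.ne' two_ne_zero]
    ring
  obtain ⟨hlow, hupp⟩ := integral_integrand_mem_Icc hγ.le hy
  rw [hmain, sub_div] at hlow hupp
  have he : e / log y ^ γ ≤ |e| / log y ^ γ := by gcongr; exact le_abs_self e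
  have he' : -e / log y ^ γ ≤ |e| / log y ^ γ := by gcongr; exact neg_le_abs e
  rw [neg_div] at he'
  rw [add_div, abs_le]
  constructor <;> linarith
end

section
/- For every real $\gamma > 0$ with $\gamma \notin \mathbb{N}$ there is a constant $C_\gamma$ such that for all $y \ge 9$, $\int_{\sqrt{y}}^{y/3} \frac{du}{(u \log u)(\log(y/u))^\gamma} \le \frac{C_\gamma}{(\log y)^{\min\{\gamma, 1\}}}$. -/
open Real MeasureTheory

/-! On `[√y, y/3]` we have `log u ≥ (log y)/2`, so the integral is at most `2 / log y` times
`∫ du / (u (log (y/u))^γ)`, which the substitution `t = log (y/u)` turns into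
`∫_{log 3}^{(log y)/2} t^(-γ) dt`. For `γ < 1` this is `O((log y)^(1-γ))`, for `γ > 1` it is
bounded; only `γ = 1`, with its `log log y` loss, has to be excluded. -/

theorem hasDerivAt_log_div_rpow_div_one_sub {y u γ : ℝ} (hu : 0 < u) (hlog : 0 < log (y / u))
    (hγ : γ ≠ 1) :
    HasDerivAt (fun v => -(log (y / v) ^ (1 - γ) / (1 - γ))) (1 / (u * log (y / u) ^ γ)) u := by
  have hyu : y / u ≠ 0 := fun h => hlog.ne' (by rw [h, log_zero])
  have hdiv : HasDerivAt (fun v => y / v) (-y / u ^ 2) u := by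
    simpa using (hasDerivAt_const u y).fun_div (hasDerivAt_id u) hu.ne'
  have hlogdiv : HasDerivAt (fun v => log (y / v)) (-(1 / u)) u :=
    ((hasDerivAt_log hyu).comp u hdiv).congr_deriv (by field_simp [(div_ne_zero_iff.1 hyu).1])
  refine ((hlogdiv.rpow_const (p := 1 - γ) (Or.inl hlog.ne')).div_const _).neg.congr_deriv ?_
  rw [show 1 - γ - 1 = -γ by ring, rpow_neg hlog.le]
  field_simp [sub_ne_zero.2 hγ.symm]

theorem three_le_sqrt_of_nine_le {y : ℝ} (hy : 9 ≤ y) : 3 ≤ √y :=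
  le_sqrt_of_sq_le (by linarith)

theorem sqrt_le_div_three_of_nine_le {y : ℝ} (hy : 9 ≤ y) : √y ≤ y / 3 := by
  have h3 := three_le_sqrt_of_nine_le hy
  have hsq := sq_sqrt (show 0 ≤ y by linarith)
  nlinarith

theorem log_bounds_of_mem_Icc_sqrt {y u : ℝ} (hy : 9 ≤ y) (hu : u ∈ Set.Icc √y (y / 3)) :
    0 < u ∧ 0 < log u ∧ log y / 2 ≤ log u ∧ 0 < log (y / u) := by
  obtain ⟨hau, hub⟩ := hu
  have h3 := three_le_sqrt_of_nine_le hy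
  have hlog_sqrt : log √y = log y / 2 := log_sqrt (by linarith)
  have hu : 0 < u := by linarith
  refine ⟨hu, log_pos (by linarith), hlog_sqrt ▸ log_le_log (by linarith) hau,
    log_pos ((one_lt_div hu).2 (by linarith))⟩

theorem one_div_mul_log_mul_rpow_le {y u γ : ℝ} (hy : 9 ≤ y) (hu : u ∈ Set.Icc √y (y / 3)) :
    1 / ((u * log u) * log (y / u) ^ γ) ≤ 2 / log y * (1 / (u * log (y / u) ^ γ)) := by
  obtain ⟨hu, hlogu, hlogu_ge, hlogyu⟩ := log_bounds_of_mem_Icc_sqrt hy hu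
  have hpow : 0 < log (y / u) ^ γ := rpow_pos_of_pos hlogyu γ
  have hlogy : 0 < log y := log_pos (by linarith)
  rw [div_mul_div_comm, mul_one, div_le_div_iff₀ (by positivity) (by positivity)]
  nlinarith [mul_pos hu hpow]

theorem continuousOn_one_div_mul_log_mul_rpow {y γ : ℝ} (hy : 9 ≤ y) :
    ContinuousOn (fun u => 1 / ((u * log u) * log (y / u) ^ γ)) (Set.Icc √y (y / 3)) := by
  have hbounds := fun u (hu : u ∈ Set.Icc √y (y / 3)) => log_bounds_of_mem_Icc_sqrt hy hu
  have hu : ∀ u ∈ Set.Icc √y (y / 3), u ≠ 0 := fun u hu => (hbounds u hu).1.ne'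
  have hlogyu : ∀ u ∈ Set.Icc √y (y / 3), 0 < log (y / u) := fun u hu =>
    (hbounds u hu).2.2.2
  have hlog_div : ContinuousOn (fun u => log (y / u)) (Set.Icc √y (y / 3)) :=
    (continuousOn_const.div continuousOn_id hu).log fun u hu' =>
      div_ne_zero (by linarith) (hu u hu')
  refine continuousOn_const.div ((continuousOn_id.mul (continuousOn_log.mono hu)).mul
    (hlog_div.rpow_const fun u hu => Or.inl (hlogyu u hu).ne')) fun u hu => ?_
  have := rpow_pos_of_pos (hlogyu u hu) γ
  obtain ⟨hu, hlogu, -⟩ := hbounds u hu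
  positivity

theorem integral_le_of_nine_le {y γ : ℝ} (hy : 9 ≤ y) (hγ : γ ≠ 1) :
    ∫ u in √y..(y / 3), 1 / ((u * log u) * log (y / u) ^ γ) ≤
      2 / log y * (((log y / 2) ^ (1 - γ) - log 3 ^ (1 - γ)) / (1 - γ)) := by
  set G : ℝ → ℝ := fun v => 2 / log y * -(log (y / v) ^ (1 - γ) / (1 - γ))
  have hderiv : ∀ u ∈ Set.Icc √y (y / 3),
      HasDerivAt G (2 / log y * (1 / (u * log (y / u) ^ γ))) u := fun u hu =>
    have ⟨hu, _, _, hlog⟩ := log_bounds_of_mem_Icc_sqrt hy hu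
    (hasDerivAt_log_div_rpow_div_one_sub hu hlog hγ).const_mul _
  calc ∫ u in √y..(y / 3), 1 / ((u * log u) * log (y / u) ^ γ)
      ≤ G (y / 3) - G √y :=
        intervalIntegral.integral_le_sub_of_hasDeriv_right_of_le (sqrt_le_div_three_of_nine_le hy)
          (fun u hu => (hderiv u hu).continuousAt.continuousWithinAt)
          (fun u hu => (hderiv u (Set.Ioo_subset_Icc_self hu)).hasDerivWithinAt)
          (continuousOn_one_div_mul_log_mul_rpow hy).integrableOn_Icc
          (fun u hu => one_div_mul_log_mul_rpow_le hy (Set.Ioo_subset_Icc_self hu))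
    _ = 2 / log y * (((log y / 2) ^ (1 - γ) - log 3 ^ (1 - γ)) / (1 - γ)) := by
        simp only [G]
        rw [div_sqrt, log_sqrt (by linarith), div_div_cancel₀ (by linarith : y ≠ 0)]
        ring

theorem stmt_4_general (γ : ℝ) (hγn : ∀ n : ℕ, γ ≠ n) :
    ∃ C : ℝ, ∀ y : ℝ, 9 ≤ y →
      (∫ u in Real.sqrt y..(y / 3), 1 / ((u * Real.log u) * (Real.log (y / u)) ^ γ)) ≤
        C / (Real.log y) ^ (min γ 1) := by
  have hγ1 : γ ≠ 1 := by simpa using hγn 1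
  have hlog_pos : ∀ y : ℝ, 9 ≤ y → 0 < log y := fun y hy => log_pos (by linarith)
  have hlog3 : 0 ≤ log 3 := log_nonneg (by norm_num)
  rcases hγ1.lt_or_gt with hlt | hgt
  · refine ⟨2 ^ γ / (1 - γ), fun y hy => (integral_le_of_nine_le hy hγ1).trans ?_⟩
    have hL := hlog_pos y hy
    have h1γ : 0 < 1 - γ := by linarith
    calc 2 / log y * (((log y / 2) ^ (1 - γ) - log 3 ^ (1 - γ)) / (1 - γ))
        ≤ 2 / log y * ((log y / 2) ^ (1 - γ) / (1 - γ)) := by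
          gcongr
          exact sub_le_self _ (rpow_nonneg hlog3 _)
      _ = 2 ^ γ / (1 - γ) / log y ^ min γ 1 := by
          rw [min_eq_left hlt.le, div_rpow hL.le zero_le_two, rpow_sub hL, rpow_sub zero_lt_two,
            rpow_one, rpow_one]
          field_simp
  · refine ⟨2 * log 3 ^ (1 - γ) / (γ - 1), fun y hy => (integral_le_of_nine_le hy hγ1).trans ?_⟩
    have hL := hlog_pos y hy
    have hγ1' : 0 < γ - 1 := by linarith
    calc 2 / log y * (((log y / 2) ^ (1 - γ) - log 3 ^ (1 - γ)) / (1 - γ))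
        = 2 / log y * ((log 3 ^ (1 - γ) - (log y / 2) ^ (1 - γ)) / (γ - 1)) := by
          rw [← neg_sub, ← neg_sub γ, neg_div_neg_eq]
      _ ≤ 2 / log y * (log 3 ^ (1 - γ) / (γ - 1)) := by
          gcongr
          exact sub_le_self _ (rpow_nonneg (by positivity) _)
      _ = 2 * log 3 ^ (1 - γ) / (γ - 1) / log y ^ min γ 1 := by
          rw [min_eq_right hgt.le, rpow_one]
          ring

/-- for `γ > 0`, `γ ∉ ℕ`, there is `C_γ` with
`∫_√y^{y/3} du/((u log u)(log(y/u))^γ) ≤ C_γ/(log y)^{min(γ,1)}` for `y ≥ 9`. -/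
theorem stmt_4 (γ : ℝ) (hγ : 0 < γ) (hγn : ∀ n : ℕ, γ ≠ n) :
    ∃ C : ℝ, ∀ y : ℝ, 9 ≤ y →
      (∫ u in Real.sqrt y..(y / 3), 1 / ((u * Real.log u) * (Real.log (y / u)) ^ γ)) ≤
        C / (Real.log y) ^ (min γ 1) :=
  stmt_4_general γ hγn
end

section
/- There is an absolute constant $C$ such that for all $y \ge 9$, $\sum_{\sqrt{y} < p \le y/3} \frac{1}{p \log(y/p)} \le C \frac{\log\log y}{\log y}$, where the sum is over primes $p$. -/
/-!
Split the primes according to the dyadic block `2 ^ j ≤ y / p < 2 ^ (j + 1)`, so that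
`1 ≤ j ≤ log₂ √y`. In block `j` every term is at most `2 ^ (j + 1) / (j y log 2)`, and since all
its primes exceed `√y` while their product is at most `(y / 2 ^ j)# ≤ 4 ^ (y / 2 ^ j)`, the block
has at most `4 y log 2 / (2 ^ j log y)` primes. Hence block `j` contributes `≤ 8 / (j log y)`, and summing
the harmonic series up to `log₂ √y ≤ log y` gives `O(log log y / log y)`.
-/

open Finset Real
open scoped Classical

lemma card_mul_log_le_of_forall_prime {Q : Finset ℕ} {a : ℝ} {n : ℕ} (ha : 0 < a)
    (hQ : ∀ p ∈ Q, p.Prime ∧ a < p ∧ p ≤ n) : (#Q : ℝ) * log a ≤ n * log 4 := by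
  have hsub : Q ⊆ {p ∈ range (n + 1) | p.Prime} := fun p hp => by
    obtain ⟨hprime, -, hpn⟩ := hQ p hp
    exact mem_filter.mpr ⟨mem_range.mpr (Nat.lt_succ_of_le hpn), hprime⟩
  have hprod : a ^ #Q ≤ 4 ^ n := calc
    a ^ #Q ≤ ∏ p ∈ Q, (p : ℝ) := by
      rw [← prod_const]
      exact prod_le_prod (fun _ _ => ha.le) fun p hp => (hQ p hp).2.1.le
    _ ≤ (primorial n : ℝ) := by
      rw [← Nat.cast_prod]
      exact_mod_cast (show ∏ p ∈ Q, p ≤ primorial n from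
        prod_le_prod_of_subset_of_one_le' hsub fun p hp _ => (mem_filter.mp hp).2.one_lt.le)
    _ ≤ 4 ^ n := by exact_mod_cast primorial_le_four_pow n
  simpa only [log_pow] using log_le_log (by positivity) hprod

lemma pow_log_floor_le (b : ℕ) {x : ℝ} (hx : 1 ≤ x) : (b : ℝ) ^ Nat.log b ⌊x⌋₊ ≤ x := calc
  (b : ℝ) ^ Nat.log b ⌊x⌋₊ ≤ ⌊x⌋₊ := by
    exact_mod_cast Nat.pow_log_le_self b (Nat.floor_pos.mpr hx).ne'
  _ ≤ x := Nat.floor_le (by linarith)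

lemma lt_pow_log_floor_succ {b : ℕ} (hb : 1 < b) (x : ℝ) :
    x < (b : ℝ) ^ (Nat.log b ⌊x⌋₊ + 1) := calc
  x < ⌊x⌋₊ + 1 := Nat.lt_floor_add_one x
  _ ≤ (b : ℝ) ^ (Nat.log b ⌊x⌋₊ + 1) := by
    exact_mod_cast Nat.lt_pow_succ_log_self hb ⌊x⌋₊

lemma sum_one_div_mul_log_le_of_dyadic {y : ℝ} (hy : 1 < y) {j : ℕ} (hj : 1 ≤ j)
    {Q : Finset ℕ} (hQ : ∀ p ∈ Q, p.Prime ∧ √y < p ∧ 2 ^ j ≤ y / p ∧ y / p < 2 ^ (j + 1)) :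
    ∑ p ∈ Q, 1 / ((p : ℝ) * log (y / p)) ≤ 8 / (j * log y) := by
  have hy0 : 0 < y := by linarith
  have hL : 0 < log y := log_pos hy
  have hlog2 : 0 < log 2 := log_pos one_lt_two
  have hjR : (1 : ℝ) ≤ j := by exact_mod_cast hj
  have hp0 : ∀ p ∈ Q, (0 : ℝ) < p := fun p hp => (sqrt_nonneg y).trans_lt (hQ p hp).2.1
  have hcard : (#Q : ℝ) * (log y / 2) ≤ y / 2 ^ j * (2 * log 2) := by
    have hQn : ∀ p ∈ Q, p.Prime ∧ √y < p ∧ p ≤ ⌊y / 2 ^ j⌋₊ := fun p hp => by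
      obtain ⟨hprime, hsp, hjp, -⟩ := hQ p hp
      refine ⟨hprime, hsp, Nat.le_floor ?_⟩
      rw [le_div_iff₀ (hp0 p hp)] at hjp
      rw [le_div_iff₀ (by positivity)]
      linarith
    calc (#Q : ℝ) * (log y / 2) = #Q * log √y := by rw [log_sqrt hy0.le]
      _ ≤ ⌊y / 2 ^ j⌋₊ * log 4 := card_mul_log_le_of_forall_prime (by positivity) hQn
      _ ≤ y / 2 ^ j * (2 * log 2) := by
        rw [show (4 : ℝ) = 2 ^ 2 by norm_num, log_pow, Nat.cast_ofNat]
        exact mul_le_mul_of_nonneg_right (Nat.floor_le (by positivity)) (by positivity)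
  have hterm : ∀ p ∈ Q, 1 / ((p : ℝ) * log (y / p)) ≤ 2 ^ (j + 1) / (y * (j * log 2)) :=
    fun p hp => by
      obtain ⟨-, -, hjp, hpj⟩ := hQ p hp
      have hlow : y / 2 ^ (j + 1) < p := by
        rw [div_lt_iff₀ (hp0 p hp)] at hpj
        rw [div_lt_iff₀ (by positivity)]
        linarith
      have hlog : j * log 2 ≤ log (y / p) := by
        rw [← log_pow]; exact log_le_log (by positivity) hjp
      rw [one_div_le (mul_pos (hp0 p hp) ((by positivity : (0 : ℝ) < j * log 2).trans_le hlog))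
        (by positivity), one_div_div,
        mul_div_right_comm]
      exact mul_le_mul hlow.le hlog (by positivity) (hp0 p hp).le
  calc ∑ p ∈ Q, 1 / ((p : ℝ) * log (y / p)) ≤ #Q * (2 ^ (j + 1) / (y * (j * log 2))) := by
        simpa only [nsmul_eq_mul] using sum_le_card_nsmul Q _ _ hterm
    _ ≤ (4 * log 2 * y / (2 ^ j * log y)) * (2 ^ (j + 1) / (y * (j * log 2))) := by
        gcongr
        rw [le_div_iff₀ (by positivity)]
        nlinarith [mul_le_mul_of_nonneg_right hcard (pow_pos two_pos j).le,
          div_mul_cancel₀ y (pow_pos two_pos j).ne']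
    _ = 8 / (j * log y) := by
        rw [pow_succ]
        field_simp
        ring

lemma harmonic_le_one_add_log_of_le {n : ℕ} {x : ℝ} (hx : 1 ≤ x) (hn : (n : ℝ) ≤ x) :
    (harmonic n : ℝ) ≤ 1 + log x := by
  refine (harmonic_le_one_add_log n).trans ((add_le_add_iff_left 1).mpr ?_)
  rcases n.eq_zero_or_pos with rfl | hn0
  · simpa using log_nonneg hx
  · exact log_le_log (by exact_mod_cast hn0) hn

lemma two_le_log_of_nine_le {y : ℝ} (hy : 9 ≤ y) : 2 ≤ log y := by
  rw [le_log_iff_exp_le (by linarith)]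
  have := exp_one_lt_d9
  calc exp 2 = exp 1 ^ 2 := by rw [← exp_nat_mul]; norm_num
    _ ≤ y := by nlinarith [exp_pos 1]

/-- `∑_{√y < p ≤ y/3} 1/(p log(y/p)) ≤ C loglog y / log y` for `y ≥ 9`. -/
theorem stmt_5 :
    ∃ C : ℝ, ∀ y : ℝ, 9 ≤ y →
      ∑ p ∈ (Finset.range (Nat.floor y + 1)).filter
          (fun p : ℕ => p.Prime ∧ Real.sqrt y < (p : ℝ) ∧ (p : ℝ) ≤ y / 3),
        1 / ((p : ℝ) * Real.log (y / p)) ≤ C * Real.log (Real.log y) / Real.log y := by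
  refine ⟨20, fun y hy => ?_⟩
  have hL := two_le_log_of_nine_le hy
  have hsqrt : 3 ≤ √y := le_sqrt_of_sq_le (by linarith)
  set P := (Finset.range (Nat.floor y + 1)).filter
      (fun p : ℕ => p.Prime ∧ Real.sqrt y < (p : ℝ) ∧ (p : ℝ) ≤ y / 3)
  have hyp : ∀ p ∈ P, 3 ≤ y / p ∧ y / p < √y := fun p hp => by
    obtain ⟨-, hsp, hp3⟩ := (mem_filter.mp hp).2
    have hp0 : (0 : ℝ) < p := by linarith
    refine ⟨by rw [le_div_iff₀ hp0]; linarith, ?_⟩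
    rw [div_lt_iff₀ hp0]
    nlinarith [sq_sqrt (show 0 ≤ y by linarith)]
  set J := Nat.log 2 ⌊√y⌋₊
  have hmaps : ∀ p ∈ P, Nat.log 2 ⌊y / p⌋₊ ∈ Icc 1 J := fun p hp => mem_Icc.mpr
    ⟨Nat.log_pos one_lt_two (Nat.le_floor (by push_cast; linarith [(hyp p hp).1])),
      Nat.log_mono_right (Nat.floor_le_floor (hyp p hp).2.le)⟩
  have hJ : (J : ℝ) ≤ log y := by
    have := log_two_gt_d9
    have : J * log 2 ≤ log y / 2 := by
      rw [← log_sqrt (by linarith), ← log_pow]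
      exact log_le_log (by positivity) (pow_log_floor_le 2 (by linarith))
    nlinarith [J.cast_nonneg (α := ℝ)]
  rw [← sum_fiberwise_of_maps_to hmaps]
  calc _ ≤ ∑ j ∈ Icc 1 J, 8 / (j * log y) := sum_le_sum fun j hj =>
        sum_one_div_mul_log_le_of_dyadic (by linarith) (mem_Icc.mp hj).1 fun p hp => by
          obtain ⟨hpP, rfl⟩ := mem_filter.mp hp
          obtain ⟨-, hprime, hsp, -⟩ := mem_filter.mp hpP
          exact ⟨hprime, hsp, pow_log_floor_le 2 (by linarith [(hyp p hpP).1]),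
            lt_pow_log_floor_succ one_lt_two _⟩
    _ = 8 * harmonic J / log y := by
        rw [harmonic_eq_sum_Icc, Rat.cast_sum, mul_sum, sum_div]
        refine sum_congr rfl fun j _ => ?_
        push_cast
        ring
    _ ≤ 8 * (1 + log (log y)) / log y := by
        gcongr; exact harmonic_le_one_add_log_of_le (by linarith) hJ
    _ ≤ 20 * log (log y) / log y := by
        have := log_two_gt_d9
        have := log_le_log two_pos hL
        gcongr ?_ / _
        linarith
end

section
/- Let $\gamma > 0$ with $\gamma \notin \mathbb{N}$, let $q$ be a prime, and let $\alpha$ be a positive integer. Then for $y \ge 9$, $\sum_{\sqrt{y} < p \le y/3,\ \nu_q(p-1)=\alpha} \frac{1}{p (\log(y/p))^\gamma} = O_\gamma\left( \frac{1}{(\log y)^{\min\{\gamma,1\}}} \right)$, where the sum is over primes $p$. -/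
/-!
For `√y < p ≤ y / 3` we have `log p > (log y) / 2` and `j := ⌊log (y / p)⌋ ≥ 1`, so the term of `p`
is at most `(2 / log y) · (log p / p) · j ^ (-γ)`. The primes with a given `j` lie in
`(y / e ^ (j + 1), y / e ^ j]`, so Chebyshev's bound `θ x ≤ x log 4` gives `∑ log p / p ≤ e log 4`
over them. The whole sum, even over all primes of `(√y, y / 3]`, is therefore
`O((log y)⁻¹ ∑_{j ≤ log y} j ^ (-γ))`, and `∑_{j ≤ J} j ^ (-γ)` is `O(J ^ (1 - γ))` for `γ < 1`
(Bernoulli's inequality, telescoped) and bounded for `γ > 1`.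
-/

open Finset Real Chebyshev
open scoped Classical

lemma sum_log_le_log_four_mul {s : Finset ℕ} {x : ℝ} (hx : 0 ≤ x)
    (hs : ∀ p ∈ s, p.Prime ∧ (p : ℝ) ≤ x) : ∑ p ∈ s, log p ≤ log 4 * x := by
  refine le_trans ?_ (theta_le_log4_mul_x hx)
  refine sum_le_sum_of_subset_of_nonneg (fun p hp => ?_) fun p _ _ => log_natCast_nonneg p
  obtain ⟨hprime, hpx⟩ := hs p hp
  simp only [mem_filter, mem_Ioc]
  exact ⟨⟨hprime.pos, Nat.le_floor hpx⟩, hprime⟩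

lemma sum_log_div_le_of_lt_mul {s : Finset ℕ} {x c : ℝ} (hx : 0 < x) (hc : 0 ≤ c)
    (hs : ∀ p ∈ s, p.Prime ∧ x < c * p ∧ (p : ℝ) ≤ x) :
    ∑ p ∈ s, log p / p ≤ c * log 4 := by
  calc ∑ p ∈ s, log p / p ≤ ∑ p ∈ s, c / x * log p := by
        refine sum_le_sum fun p hp => ?_
        obtain ⟨hprime, hxp, -⟩ := hs p hp
        have hp0 : (0 : ℝ) < p := by exact_mod_cast hprime.pos
        rw [div_eq_inv_mul]
        refine mul_le_mul_of_nonneg_right ?_ (log_natCast_nonneg p)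
        rw [inv_eq_one_div, div_le_div_iff₀ hp0 hx]
        linarith
    _ = c / x * ∑ p ∈ s, log p := (mul_sum ..).symm
    _ ≤ c / x * (log 4 * x) :=
        mul_le_mul_of_nonneg_left
          (sum_log_le_log_four_mul hx.le fun p hp => ⟨(hs p hp).1, (hs p hp).2.2⟩)
          (div_nonneg hc hx.le)
    _ = c * log 4 := by field_simp

lemma sum_log_div_le_of_floor_log_div_eq {s : Finset ℕ} {y : ℝ} {j : ℕ} (hy : 0 < y)
    (hj : j ≠ 0) (hs : ∀ p ∈ s, p.Prime ∧ ⌊log (y / p)⌋₊ = j) :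
    ∑ p ∈ s, log p / p ≤ exp 1 * log 4 := by
  refine sum_log_div_le_of_lt_mul (div_pos hy (exp_pos j)) (exp_pos 1).le fun p hp => ?_
  obtain ⟨hprime, hpj⟩ := hs p hp
  have hp0 : (0 : ℝ) < p := by exact_mod_cast hprime.pos
  have hyp : 0 < y / p := div_pos hy hp0
  have hlow : exp j ≤ y / p := by
    rw [← exp_log hyp, exp_le_exp, ← Nat.le_floor_iff' hj, hpj]
  have hupp : y / p < exp j * exp 1 := by
    rw [← exp_add, ← exp_log hyp, exp_lt_exp, ← hpj]
    exact Nat.lt_floor_add_one _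
  refine ⟨hprime, ?_, ?_⟩
  · rw [div_lt_iff₀ (exp_pos _)]
    rw [div_lt_iff₀ hp0] at hupp
    linarith
  · rw [le_div_iff₀ (exp_pos _)]
    rw [le_div_iff₀ hp0] at hlow
    linarith

lemma one_le_log_div_of_le_div_three {x y : ℝ} (hx : 0 < x) (h : x ≤ y / 3) :
    1 ≤ log (y / x) := by
  have h3 : 3 ≤ y / x := by
    rw [le_div_iff₀ hx]
    rw [le_div_iff₀ (by norm_num)] at h
    linarith
  calc (1 : ℝ) = log (exp 1) := (log_exp 1).symm
    _ ≤ log 3 := log_le_log (exp_pos 1) (by linarith [exp_one_lt_d9])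
    _ ≤ log (y / x) := log_le_log (by norm_num) h3

lemma half_log_lt_log_of_sqrt_lt {x y : ℝ} (hy : 0 < y) (h : √y < x) : log y / 2 < log x := by
  simpa [log_sqrt hy.le] using log_lt_log (sqrt_pos.mpr hy) h

lemma floor_log_div_mem_Icc {y : ℝ} {p : ℕ} (hsqrt : √y < p) (hp3 : (p : ℝ) ≤ y / 3) :
    ⌊log (y / p)⌋₊ ∈ Icc 1 ⌊log y⌋₊ := by
  have hp0 : (0 : ℝ) < p := (sqrt_nonneg y).trans_lt hsqrt
  have hp1 : (1 : ℝ) ≤ p := Nat.one_le_cast.mpr (Nat.cast_pos.mp hp0)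
  have hy : 0 < y := by linarith
  refine mem_Icc.mpr ⟨(Nat.one_le_floor_iff _).mpr (one_le_log_div_of_le_div_three hp0 hp3),
    Nat.floor_le_floor ?_⟩
  rw [log_div hy.ne' hp0.ne']
  linarith [log_nonneg hp1]

lemma inv_mul_log_div_rpow_le {γ y : ℝ} {p : ℕ} (hγ : 0 < γ) (hsqrt : √y < p)
    (hp3 : (p : ℝ) ≤ y / 3) :
    1 / (p * log (y / p) ^ γ) ≤ 2 / log y * (log p / p * (⌊log (y / p)⌋₊ : ℝ) ^ (-γ)) := by
  have hp0 : (0 : ℝ) < p := (sqrt_nonneg y).trans_lt hsqrt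
  have hp1 : (1 : ℝ) ≤ p := Nat.one_le_cast.mpr (Nat.cast_pos.mp hp0)
  have hy : 0 < y := by linarith
  have hL0 : 0 < log y := log_pos (by linarith)
  have hu := one_le_log_div_of_le_div_three hp0 hp3
  have hlogp := half_log_lt_log_of_sqrt_lt hy hsqrt
  set j := ⌊log (y / p)⌋₊
  have hj1 : (1 : ℝ) ≤ j := by exact_mod_cast (Nat.one_le_floor_iff _).mpr hu
  have hjpow : (j : ℝ) ^ γ ≤ log (y / p) ^ γ :=
    rpow_le_rpow (by linarith) (Nat.floor_le (by linarith)) hγ.le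
  calc 1 / (p * log (y / p) ^ γ) ≤ 1 / (p * j ^ γ) :=
        one_div_le_one_div_of_le (by positivity) (mul_le_mul_of_nonneg_left hjpow hp0.le)
    _ = 1 * (1 / p * (j : ℝ) ^ (-γ)) := by
        rw [rpow_neg (by linarith)]
        field_simp
    _ ≤ 2 / log y * log p * (1 / p * (j : ℝ) ^ (-γ)) := by
        refine mul_le_mul_of_nonneg_right ?_ (by positivity)
        rw [div_mul_eq_mul_div, le_div_iff₀ hL0]
        linarith
    _ = _ := by ring

lemma sum_inv_mul_log_div_rpow_le {γ y : ℝ} (hγ : 0 < γ) (hy : 1 ≤ y) (s : Finset ℕ)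
    (hs : ∀ p ∈ s, p.Prime ∧ √y < p ∧ (p : ℝ) ≤ y / 3) :
    ∑ p ∈ s, 1 / (p * log (y / p) ^ γ) ≤
      2 * exp 1 * log 4 / log y * ∑ j ∈ Icc 1 ⌊log y⌋₊, (j : ℝ) ^ (-γ) := by
  have hL0 : 0 ≤ log y := log_nonneg hy
  calc ∑ p ∈ s, 1 / (p * log (y / p) ^ γ)
      ≤ 2 / log y * ∑ p ∈ s, log p / p * (⌊log (y / p)⌋₊ : ℝ) ^ (-γ) := by
        rw [mul_sum]
        exact sum_le_sum fun p hp => inv_mul_log_div_rpow_le hγ (hs p hp).2.1 (hs p hp).2.2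
    _ = 2 / log y * ∑ j ∈ Icc 1 ⌊log y⌋₊,
          (j : ℝ) ^ (-γ) * ∑ p ∈ s.filter (fun p : ℕ => ⌊log (y / p)⌋₊ = j), log p / p := by
        rw [← sum_fiberwise_of_maps_to fun p hp =>
          floor_log_div_mem_Icc (hs p hp).2.1 (hs p hp).2.2]
        congr 1
        refine sum_congr rfl fun j _ => ?_
        rw [mul_sum]
        refine sum_congr rfl fun p hp => ?_
        rw [(mem_filter.mp hp).2, mul_comm]
    _ ≤ 2 / log y * ∑ j ∈ Icc 1 ⌊log y⌋₊, (j : ℝ) ^ (-γ) * (exp 1 * log 4) := by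
        refine mul_le_mul_of_nonneg_left (sum_le_sum fun j hj => ?_) (by positivity)
        refine mul_le_mul_of_nonneg_left ?_ (by positivity)
        refine sum_log_div_le_of_floor_log_div_eq (by linarith : (0 : ℝ) < y)
          (Nat.one_le_iff_ne_zero.mp (mem_Icc.mp hj).1) fun p hp => ?_
        exact ⟨(hs p (mem_filter.mp hp).1).1, (mem_filter.mp hp).2⟩
    _ = _ := by
        rw [← sum_mul]
        ring

lemma rpow_neg_le_sub_rpow_div {γ x : ℝ} (hγ0 : 0 ≤ γ) (hγ1 : γ < 1) (hx : 1 ≤ x) :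
    x ^ (-γ) ≤ (x ^ (1 - γ) - (x - 1) ^ (1 - γ)) / (1 - γ) := by
  have hx0 : 0 < x := by linarith
  have bernoulli : (1 + -x⁻¹) ^ (1 - γ) ≤ 1 + (1 - γ) * -x⁻¹ :=
    rpow_one_add_le_one_add_mul_self (by simpa using inv_le_one_of_one_le₀ hx) (by linarith)
      (by linarith)
  have hsplit : x ^ (1 - γ) * x⁻¹ = x ^ (-γ) := by
    rw [sub_eq_add_neg, rpow_add hx0, rpow_one]
    field_simp
  have hprev : (x - 1) ^ (1 - γ) = x ^ (1 - γ) * (1 + -x⁻¹) ^ (1 - γ) := by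
    rw [← mul_rpow hx0.le (by simpa using inv_le_one_of_one_le₀ hx)]
    congr 1
    field_simp
    ring
  rw [le_div_iff₀ (by linarith), hprev]
  have h := mul_le_mul_of_nonneg_left bernoulli (rpow_nonneg hx0.le (1 - γ))
  rw [show x ^ (1 - γ) * (1 + (1 - γ) * -x⁻¹) = x ^ (1 - γ) - (1 - γ) * (x ^ (1 - γ) * x⁻¹) by
    ring, hsplit] at h
  linarith

lemma sum_Icc_rpow_neg_le {γ : ℝ} (hγ0 : 0 ≤ γ) (hγ1 : γ < 1) (J : ℕ) :
    ∑ j ∈ Icc 1 J, (j : ℝ) ^ (-γ) ≤ (J : ℝ) ^ (1 - γ) / (1 - γ) := by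
  induction J with
  | zero => simpa using div_nonneg (rpow_nonneg le_rfl (1 - γ)) (by linarith)
  | succ J ih =>
    rw [sum_Icc_succ_top (by omega)]
    have hstep := rpow_neg_le_sub_rpow_div hγ0 hγ1 (x := (J + 1 : ℕ)) (by simp)
    push_cast at hstep ⊢
    rw [add_sub_cancel_right] at hstep
    calc _ ≤ (J : ℝ) ^ (1 - γ) / (1 - γ)
          + ((J + 1 : ℝ) ^ (1 - γ) - (J : ℝ) ^ (1 - γ)) / (1 - γ) := add_le_add ih hstep
      _ = _ := by ring

lemma exists_sum_Icc_rpow_neg_le {γ : ℝ} (hγ : 0 < γ) (hγ1 : γ ≠ 1) :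
    ∃ K : ℝ, ∀ x : ℝ, 0 ≤ x →
      ∑ j ∈ Icc 1 ⌊x⌋₊, (j : ℝ) ^ (-γ) ≤ K * x ^ (1 - min γ 1) := by
  rcases hγ1.lt_or_gt with hlt | hgt
  · refine ⟨1 / (1 - γ), fun x hx => ?_⟩
    rw [min_eq_left hlt.le]
    calc _ ≤ (⌊x⌋₊ : ℝ) ^ (1 - γ) / (1 - γ) := sum_Icc_rpow_neg_le hγ.le hlt _
      _ ≤ x ^ (1 - γ) / (1 - γ) := by
          gcongr
          exact Nat.floor_le hx
      _ = _ := by ring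
  · refine ⟨∑' j : ℕ, (j : ℝ) ^ (-γ), fun x _ => ?_⟩
    rw [min_eq_right hgt.le, sub_self, rpow_zero, mul_one]
    exact Summable.sum_le_tsum _ (fun j _ => rpow_nonneg j.cast_nonneg _)
      (summable_nat_rpow.mpr (by linarith))

theorem stmt_9_general (γ : ℝ) (hγ : 0 < γ) (hγn : ∀ n : ℕ, γ ≠ n)
    (q : ℕ) (α : ℕ) :
    ∃ C : ℝ, ∀ y : ℝ, 9 ≤ y →
      |∑ p ∈ (Finset.range (Nat.floor y + 1)).filter
          (fun p : ℕ => p.Prime ∧ Real.sqrt y < (p : ℝ) ∧ (p : ℝ) ≤ y / 3 ∧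
            (p - 1).factorization q = α),
        1 / ((p : ℝ) * (Real.log (y / p)) ^ γ)| ≤ C / (Real.log y) ^ (min γ 1) := by
  obtain ⟨K, hK⟩ := exists_sum_Icc_rpow_neg_le hγ (by exact_mod_cast hγn 1)
  refine ⟨2 * exp 1 * log 4 * K, fun y hy => ?_⟩
  have hL : 0 < log y := log_pos (by linarith)
  rw [abs_of_nonneg (sum_nonneg fun p hp => by
    obtain ⟨-, hsqrt, hp3, -⟩ := (mem_filter.mp hp).2
    have := one_le_log_div_of_le_div_three ((sqrt_nonneg y).trans_lt hsqrt) hp3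
    positivity)]
  calc _ ≤ 2 * exp 1 * log 4 / log y * ∑ j ∈ Icc 1 ⌊log y⌋₊, (j : ℝ) ^ (-γ) :=
        sum_inv_mul_log_div_rpow_le hγ (by linarith) _ fun p hp =>
          have ⟨hprime, hsqrt, hp3, _⟩ := (mem_filter.mp hp).2
          ⟨hprime, hsqrt, hp3⟩
    _ ≤ 2 * exp 1 * log 4 / log y * (K * log y ^ (1 - min γ 1)) := by
        gcongr
        exact hK _ hL.le
    _ = _ := by
        rw [rpow_sub hL, rpow_one]
        field_simp

/-- for `γ > 0`, `γ ∉ ℕ`, prime `q`, `α ≥ 1`, and `y ≥ 9`: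
`∑_{√y < p ≤ y/3, ν_q(p-1)=α} 1/(p (log(y/p))^γ) = O_γ(1/(log y)^{min(γ,1)})`. -/
theorem stmt_9 (γ : ℝ) (hγ : 0 < γ) (hγn : ∀ n : ℕ, γ ≠ n)
    (q : ℕ) (hq : q.Prime) (α : ℕ) (hα : 1 ≤ α) :
    ∃ C : ℝ, ∀ y : ℝ, 9 ≤ y →
      |∑ p ∈ (Finset.range (Nat.floor y + 1)).filter
          (fun p : ℕ => p.Prime ∧ Real.sqrt y < (p : ℝ) ∧ (p : ℝ) ≤ y / 3 ∧
            (p - 1).factorization q = α),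
        1 / ((p : ℝ) * (Real.log (y / p)) ^ γ)| ≤ C / (Real.log y) ^ (min γ 1) :=
  stmt_9_general γ hγ hγn q α
end
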